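/- Let n ≥ 2 and let a = (a_1, a_2, ā) ∈ ℝ^n satisfy det(a) = a_1² + a_2² − ‖ā‖² = 1, det̄(a) = (a_1 + a_2)² − 2‖ā‖² = 1, and 1 + a_1 + a_2 ≠ 0. Then the matrix W_a satisfies W_a Q W_a = Q and W_a · W_{Qa} = I_n, where Qa = (a_1, a_2, −ā) and Q = diag(1, 1, −1, …, −1) ∈ ℝ^{n×n}. -/

import Mathlib

noncomputable section

open Real Finset

/-- Euclidean dot product of two vectors in `ℝ^n`. -/
def dotp {n : ℕ} (x y : Fin n → ℝ) : ℝ := ∑ i, x i * y i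

/-- Euclidean norm of a vector in `ℝ^n`. -/
def enormE {n : ℕ} (x : Fin n → ℝ) : ℝ := Real.sqrt (∑ i, (x i) ^ 2)

/-- The tail `x̄ = (x_3, …, x_n)` of a vector, embedded back into `ℝ^n`
(first two coordinates replaced by `0`). Indices are 0-based, so the tail
consists of the coordinates with index `≥ 2`. -/
def tl {n : ℕ} (x : Fin (n + 2) → ℝ) : Fin (n + 2) → ℝ :=
  fun i => if 2 ≤ (i : ℕ) then x i else 0

/-- The eigenvalue `λ1(x) = x_1 - x_2`. -/
def lam1 {n : ℕ} (x : Fin (n + 2) → ℝ) : ℝ := x 0 - x 1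

/-- The eigenvalue `λ2(x) = x_1 + x_2 - √2 ‖x̄‖`. -/
def lam2 {n : ℕ} (x : Fin (n + 2) → ℝ) : ℝ := x 0 + x 1 - Real.sqrt 2 * enormE (tl x)

/-- The eigenvalue `λ4(x) = x_1 + x_2 + √2 ‖x̄‖`. -/
def lam4 {n : ℕ} (x : Fin (n + 2) → ℝ) : ℝ := x 0 + x 1 + Real.sqrt 2 * enormE (tl x)

/-- The Jordan-type product `x ◇ s`. -/
def diam {n : ℕ} (x s : Fin (n + 2) → ℝ) : Fin (n + 2) → ℝ :=
  fun i =>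
    if (i : ℕ) = 0 then dotp x s
    else if (i : ℕ) = 1 then x 1 * s 0 + x 0 * s 1 + dotp (tl x) (tl s)
    else (s 0 + s 1) * x i + (x 0 + x 1) * s i

/-- The trace `Tr(x) = 2 x_1`. -/
def trace {n : ℕ} (x : Fin (n + 2) → ℝ) : ℝ := 2 * x 0

/-- `det̄(x) = (x_1 + x_2)² - 2 ‖x̄‖²`. -/
def detbar {n : ℕ} (x : Fin (n + 2) → ℝ) : ℝ := (x 0 + x 1) ^ 2 - 2 * (enormE (tl x)) ^ 2

/-- `det(x) = x_1² + x_2² - ‖x̄‖²`. -/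
def det2 {n : ℕ} (x : Fin (n + 2) → ℝ) : ℝ := (x 0) ^ 2 + (x 1) ^ 2 - (enormE (tl x)) ^ 2

/-- `det_(x) = 2 x_1 x_2 - ‖x̄‖²`. -/
def detund {n : ℕ} (x : Fin (n + 2) → ℝ) : ℝ := 2 * x 0 * x 1 - (enormE (tl x)) ^ 2

/-- Membership in the type-2 second order cone `Υ^n`. -/
def inCone {n : ℕ} (x : Fin (n + 2) → ℝ) : Prop := 0 ≤ lam1 x ∧ 0 ≤ lam2 x

/-- Membership in the interior `Υ^n_+` of the type-2 second order cone. -/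
def inConeInt {n : ℕ} (x : Fin (n + 2) → ℝ) : Prop := 0 < lam1 x ∧ 0 < lam2 x

/-- The unit element `e = (1, 0, …, 0)`. -/
def eVec {n : ℕ} : Fin (n + 2) → ℝ := fun i => if (i : ℕ) = 0 then 1 else 0

/-- The spectral vector `g(x) = g(λ1(x)) v1 + g(λ2(x)) v2 + g(λ4(x)) v4`.
Its tail entries are `(g(λ4(x)) - g(λ2(x))) xᵢ / (2√2 ‖x̄‖)` when `x̄ ≠ 0`;
when `x̄ = 0` the written formula evaluates to `0` automatically since then
`xᵢ = 0` for `i ≥ 2`. -/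
def specVec {n : ℕ} (g : ℝ → ℝ) (x : Fin (n + 2) → ℝ) : Fin (n + 2) → ℝ :=
  fun i =>
    if (i : ℕ) = 0 then (1 / 2) * g (lam1 x) + (1 / 4) * g (lam2 x) + (1 / 4) * g (lam4 x)
    else if (i : ℕ) = 1 then -(1 / 2) * g (lam1 x) + (1 / 4) * g (lam2 x) + (1 / 4) * g (lam4 x)
    else (g (lam4 x) - g (lam2 x)) * x i / (2 * Real.sqrt 2 * enormE (tl x))

/-- The barrier value `Ψ(x) = ψ(λ1(x)) + ½ψ(λ2(x)) + ½ψ(λ4(x))`. -/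
def Psi {n : ℕ} (g : ℝ → ℝ) (x : Fin (n + 2) → ℝ) : ℝ :=
  g (lam1 x) + (1 / 2) * g (lam2 x) + (1 / 2) * g (lam4 x)

/-- The barrier value of a block vector. -/
def PsiBlk {N : ℕ} {nf : Fin N → ℕ} (g : ℝ → ℝ) (v : ∀ j, Fin (nf j + 2) → ℝ) : ℝ :=
  ∑ j, Psi g (v j)

/-- The norm-based proximity `δ(v) = (1/√2) (Σⱼ ‖ψ'(vʲ)‖²)^{1/2}`. -/
def deltaBlk {N : ℕ} {nf : Fin N → ℕ} (g : ℝ → ℝ) (v : ∀ j, Fin (nf j + 2) → ℝ) : ℝ :=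
  (1 / Real.sqrt 2) * Real.sqrt (∑ j, (enormE (specVec g (v j))) ^ 2)

/-- `λ_min(v) = minⱼ min{λ1(vʲ), λ2(vʲ)}`. -/
def lamMin {N : ℕ} {nf : Fin N → ℕ} (v : ∀ j, Fin (nf j + 2) → ℝ) : ℝ :=
  ⨅ j, min (lam1 (v j)) (lam2 (v j))

/-- The matrix `W_a`: upper-left 2×2 block `[[a_1, a_2], [a_2, a_1]]`, first two
rows/columns ending in `āᵀ`/`ā`, and lower-right block
`I + 2 ā āᵀ/(1 + a_1 + a_2)` (0-based indices: `a_1 = a 0`, `a_2 = a 1`). -/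
def Wmat {n : ℕ} (a : Fin (n + 2) → ℝ) : Matrix (Fin (n + 2)) (Fin (n + 2)) ℝ :=
  fun i j =>
    if (i : ℕ) = 0 then
      (if (j : ℕ) = 0 then a 0 else if (j : ℕ) = 1 then a 1 else a j)
    else if (i : ℕ) = 1 then
      (if (j : ℕ) = 0 then a 1 else if (j : ℕ) = 1 then a 0 else a j)
    else
      (if (j : ℕ) = 0 then a i else if (j : ℕ) = 1 then a i
       else (if i = j then 1 else 0) + 2 * a i * a j / (1 + a 0 + a 1))

/-- The matrix `Q = diag(1, 1, -1, …, -1)`. -/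
def Qmat (n : ℕ) : Matrix (Fin (n + 2)) (Fin (n + 2)) ℝ :=
  Matrix.diagonal (fun i => if (i : ℕ) < 2 then (1 : ℝ) else -1)

lemma stmt10_aux {n : ℕ} (a : Fin (n + 2) → ℝ)
    (hs1 : (a 0) ^ 2 + (a 1) ^ 2 - (∑ k : Fin n, a k.succ.succ ^ 2) = 1)
    (hs2 : (a 0 + a 1) ^ 2 - 2 * (∑ k : Fin n, a k.succ.succ ^ 2) = 1)
    (h3 : 1 + a 0 + a 1 ≠ 0) :
    Wmat a * Qmat n * Wmat a = Qmat n := by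
  set s : ℝ := ∑ k : Fin n, a k.succ.succ ^ 2 with hs_def
  set c : ℝ := 1 + a 0 + a 1 with hc_def
  have hsplit : ∀ f : Fin (n+2) → ℝ, ∑ k, f k = f 0 + f 1 + ∑ k : Fin n, f k.succ.succ := by
    intro f; rw [Fin.sum_univ_succ, Fin.sum_univ_succ]; simp [add_assoc]
  have hcase : ∀ i : Fin (n+2), i = 0 ∨ i = 1 ∨ ∃ m : Fin n, i = m.succ.succ := by
    intro i
    refine Fin.cases (Or.inl rfl) (fun i => ?_) i
    refine Fin.cases (Or.inr (Or.inl rfl)) (fun m => Or.inr (Or.inr ⟨m, rfl⟩)) i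
  have hentry : ∀ i j, (Wmat a * Qmat n * Wmat a) i j
      = ∑ k, Wmat a i k * (if (k:ℕ) < 2 then (1:ℝ) else -1) * Wmat a k j := by
    intro i j
    rw [Matrix.mul_apply]
    simp only [Qmat, Matrix.mul_diagonal]
  ext i j
  rw [hentry, hsplit]
  have hlt : ∀ x : ℕ, ¬ (x + 1 + 1 < 2) := fun x => by omega
  have h20 : ∀ m : Fin n, ¬ ((0 : Fin (n+2)) = m.succ.succ) := fun m => (Fin.succ_ne_zero _).symm
  have h21 : ∀ m : Fin n, ¬ ((1 : Fin (n+2)) = m.succ.succ) := fun m => (Fin.succ_succ_ne_one m).symm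
  have h2c : 2 * s = (a 0 + a 1 - 1) * (1 + a 0 + a 1) := by linear_combination -hs2
  have hc2 : c ^ 2 = 2 * c + 2 * s := by rw [hc_def]; linear_combination hs2
  have S1 : ∑ x : Fin n, a x.succ.succ * a x.succ.succ = s := by
    rw [hs_def]; exact Finset.sum_congr rfl fun x _ => (sq _).symm
  have S2 : ∀ r : ℝ, ∑ x : Fin n, a x.succ.succ * (2 * a x.succ.succ * r / (1 + a 0 + a 1)) = s * (2 * r / c) := by
    intro r
    calc ∑ x : Fin n, a x.succ.succ * (2 * a x.succ.succ * r / (1 + a 0 + a 1))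
        = ∑ x : Fin n, a x.succ.succ ^ 2 * (2 * r / (1 + a 0 + a 1)) :=
          Finset.sum_congr rfl fun x _ => by ring
      _ = s * (2 * r / c) := by rw [← Finset.sum_mul, hs_def]
  have S3 : ∀ r : ℝ, ∑ x : Fin n, 2 * r * a x.succ.succ / (1 + a 0 + a 1) * a x.succ.succ = s * (2 * r / c) := by
    intro r
    calc ∑ x : Fin n, 2 * r * a x.succ.succ / (1 + a 0 + a 1) * a x.succ.succ
        = ∑ x : Fin n, a x.succ.succ ^ 2 * (2 * r / (1 + a 0 + a 1)) :=
          Finset.sum_congr rfl fun x _ => by ring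
      _ = s * (2 * r / c) := by rw [← Finset.sum_mul, hs_def]
  have S4 : ∀ p q : ℝ, ∑ x : Fin n,
      2 * p * a x.succ.succ / (1 + a 0 + a 1) * (2 * a x.succ.succ * q / (1 + a 0 + a 1))
      = s * (4 * p * q / c / c) := by
    intro p q
    calc ∑ x : Fin n, 2 * p * a x.succ.succ / (1 + a 0 + a 1) * (2 * a x.succ.succ * q / (1 + a 0 + a 1))
        = ∑ x : Fin n, a x.succ.succ ^ 2 * (4 * p * q / (1 + a 0 + a 1) / (1 + a 0 + a 1)) :=
          Finset.sum_congr rfl fun x _ => by ring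
      _ = s * (4 * p * q / c / c) := by rw [← Finset.sum_mul, hs_def]
  have hsc : ∀ r : ℝ, s * (2 * r / c) = (a 0 + a 1 - 1) * r := by
    intro r; field_simp; linear_combination r * h2c
  have hsc4 : ∀ p q : ℝ, s * (4 * p * q / c / c) = 2 * p * q - 4 * p * q / c := by
    intro p q
    have hs' : s = (c ^ 2 - 2 * c) / 2 := by linear_combination -hc2 / 2
    rw [hs']; field_simp; ring
  rcases hcase i with rfl | rfl | ⟨m, rfl⟩ <;> rcases hcase j with rfl | rfl | ⟨m', rfl⟩ <;>
    simp [Wmat, Qmat, Matrix.diagonal, Fin.succ_inj, hlt, h20, h21, fun m => Ne.symm (h20 m), fun m => Ne.symm (h21 m),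
      mul_add, add_mul, Finset.sum_add_distrib,
      ite_mul, mul_ite, ← Finset.sum_div, ← Finset.sum_mul, ← Finset.mul_sum]
  · rw [S1]; linear_combination hs1
  · rw [S1]; linear_combination hs2 - hs1
  · rw [S2, hsc]; ring
  · rw [S1]; linear_combination hs2 - hs1
  · rw [S1]; linear_combination hs1
  · rw [S2, hsc]; ring
  · rw [S3, hsc]; ring
  · rw [S3, hsc]; ring
  · rw [S4, hsc4]; split <;> ring

/-- if `det(a) = a_1² + a_2² - ‖ā‖² = 1`,
`det̄(a) = (a_1 + a_2)² - 2‖ā‖² = 1` and `1 + a_1 + a_2 ≠ 0`, then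
`W_a Q W_a = Q` and `W_a W_{Qa} = I` where `Qa = (a_1, a_2, -ā)`. -/
theorem stmt10 (n : ℕ) (a : Fin (n + 2) → ℝ)
    (h1 : (a 0) ^ 2 + (a 1) ^ 2 - (enormE (tl a)) ^ 2 = 1)
    (h2 : (a 0 + a 1) ^ 2 - 2 * (enormE (tl a)) ^ 2 = 1)
    (h3 : 1 + a 0 + a 1 ≠ 0) :
    Wmat a * Qmat n * Wmat a = Qmat n ∧
    Wmat a * Wmat (fun i => if (i : ℕ) < 2 then a i else -a i) = 1 := by
  have hcase : ∀ i : Fin (n+2), i = 0 ∨ i = 1 ∨ ∃ m : Fin n, i = m.succ.succ := by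
    intro i
    refine Fin.cases (Or.inl rfl) (fun i => ?_) i
    refine Fin.cases (Or.inr (Or.inl rfl)) (fun m => Or.inr (Or.inr ⟨m, rfl⟩)) i
  have hle : ∀ x : ℕ, 2 ≤ x + 1 + 1 := fun x => by omega
  have htl : enormE (tl a) ^ 2 = ∑ k : Fin n, a k.succ.succ ^ 2 := by
    rw [enormE, Real.sq_sqrt (by positivity)]
    rw [Fin.sum_univ_succ, Fin.sum_univ_succ]
    simp [tl, hle]
  rw [htl] at h1 h2
  have hWQW := stmt10_aux a h1 h2 h3
  have hQQ : Qmat n * Qmat n = 1 := by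
    rw [Qmat, Matrix.diagonal_mul_diagonal]
    have h : (fun i : Fin (n+2) => (if (i:ℕ) < 2 then (1:ℝ) else -1) * (if (i:ℕ) < 2 then (1:ℝ) else -1))
        = fun _ => 1 := by funext i; split <;> norm_num
    rw [h, Matrix.diagonal_one]
  have hQWQ : Wmat (fun i => if (i : ℕ) < 2 then a i else -a i)
      = Qmat n * Wmat a * Qmat n := by
    have hlt : ∀ x : ℕ, ¬ (x + 1 + 1 < 2) := fun x => by omega
    ext i j
    rw [Matrix.mul_apply]
    simp only [Qmat, Matrix.mul_diagonal, Matrix.diagonal_apply, Finset.sum_ite_eq,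
      Finset.mem_univ, if_true]
    rcases hcase i with rfl | rfl | ⟨m, rfl⟩ <;> rcases hcase j with rfl | rfl | ⟨m', rfl⟩ <;>
      simp [Wmat, hlt, Fin.succ_inj]
  refine ⟨hWQW, ?_⟩
  rw [hQWQ, show Wmat a * (Qmat n * Wmat a * Qmat n) = Wmat a * Qmat n * Wmat a * Qmat n by
    rw [Matrix.mul_assoc, Matrix.mul_assoc, Matrix.mul_assoc], hWQW, hQQ]


end
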